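/- Let A be a bounded subset of ℝ^N satisfying |A_t| = t^{N-D}(M + O(t^α)) as t → 0⁺, with α > 0, M ∈ (0,∞), D ≥ 0. Then the tube zeta function ζ̃_A(s) := ∫_0^δ t^{s-N-1}|A_t| dt (for fixed δ > 0) admits a meromorphic continuation to the half-plane {Re(s) > D − α}, whose only pole there is the simple pole s = D with residue res(ζ̃_A, D) = M. -/

import Mathlib

open MeasureTheory Metric Filter Set Topology

/-- The tube zeta function `ζ̃_A(s) = ∫_0^δ t^{s-N-1} |A_t| dt` of `A ⊆ ℝ^N`. -/
noncomputable def tubeZeta (N : ℕ) (A : Set (EuclideanSpace ℝ (Fin N))) (δ : ℝ)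
    (s : ℂ) : ℂ :=
  ∫ t in Set.Ioo (0 : ℝ) δ,
    (t : ℂ) ^ (s - (N : ℂ) - 1) * ((volume (Metric.thickening t A)).toReal : ℂ)

open Asymptotics

/-!
Write `|A_t| = t^{N-D} u(t)`, so that `u` is bounded on `(0, δ)` and `u(t) = M + O(t^α)`.
With `w = s - D`, the tube zeta function is the truncated Mellin transform
`Z(w) = ∫_0^δ t^{w-1} u(t) dt`, and subtracting the constant `M` from `u` gives
`w Z(w) = M δ^w + w ∫_0^δ t^{w-1} (u(t) - M) dt` for `Re w > 0`.
The last integral is the Mellin transform of a function that is `O(t^α)` at `0` and vanishes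
beyond `δ`, hence holomorphic on `Re w > -α`; the right-hand side is the continuation of
`w Z(w)`, and its value at `w = 0` is `M`.
-/

section TruncatedMellin

variable {δ : ℝ} {w : ℂ}

lemma integrableOn_Ioo_cpow_sub_one (hw : 0 < w.re) :
    IntegrableOn (fun t : ℝ => (t : ℂ) ^ (w - 1)) (Ioo 0 δ) :=
  (intervalIntegral.intervalIntegrable_cpow' (a := 0) (b := δ) (by simpa using hw)).1.mono_set
    Ioo_subset_Ioc_self

lemma setIntegral_Ioo_cpow_sub_one (hδ : 0 ≤ δ) (hw : 0 < w.re) :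
    ∫ t in Ioo 0 δ, (t : ℂ) ^ (w - 1) = (δ : ℂ) ^ w / w := by
  have hw0 : w ≠ 0 := by rintro rfl; simp at hw
  rw [← integral_Ioc_eq_integral_Ioo, ← intervalIntegral.integral_of_le hδ,
    integral_cpow (Or.inl (by simpa using hw)), sub_add_cancel, Complex.ofReal_zero,
    Complex.zero_cpow hw0, sub_zero]

lemma integrableOn_Ioo_cpow_sub_one_mul {u : ℝ → ℂ} {K : ℝ}
    (hu : AEStronglyMeasurable u (volume.restrict (Ioo 0 δ)))
    (huK : ∀ t ∈ Ioo 0 δ, ‖u t‖ ≤ K) (hw : 0 < w.re) :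
    IntegrableOn (fun t : ℝ => (t : ℂ) ^ (w - 1) * u t) (Ioo 0 δ) :=
  (integrableOn_Ioo_cpow_sub_one hw).mul_bdd hu
    ((ae_restrict_iff' measurableSet_Ioo).2 (ae_of_all _ huK))

lemma mul_setIntegral_Ioo_cpow_sub_one_mul (hδ : 0 ≤ δ) (hw : 0 < w.re) (M : ℂ) {u : ℝ → ℂ}
    (hu : IntegrableOn (fun t : ℝ => (t : ℂ) ^ (w - 1) * u t) (Ioo 0 δ)) :
    w * ∫ t in Ioo 0 δ, (t : ℂ) ^ (w - 1) * u t =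
      M * (δ : ℂ) ^ w + w * ∫ t in Ioo 0 δ, (t : ℂ) ^ (w - 1) * (u t - M) := by
  have hw0 : w ≠ 0 := by rintro rfl; simp at hw
  simp_rw [mul_sub]
  rw [integral_sub hu ((integrableOn_Ioo_cpow_sub_one hw).mul_const M), integral_mul_const,
    setIntegral_Ioo_cpow_sub_one hδ hw]
  field_simp
  ring

lemma setIntegral_Ioo_cpow_sub_one_mul_eq_mellin (g : ℝ → ℂ) (w : ℂ) :
    ∫ t in Ioo 0 δ, (t : ℂ) ^ (w - 1) * g t = mellin ((Ioo 0 δ).indicator g) w := by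
  simp_rw [mellin, smul_eq_mul, ← indicator_mul_right _ (fun t : ℝ => (t : ℂ) ^ (w - 1)),
    integral_indicator measurableSet_Ioo, Measure.restrict_restrict measurableSet_Ioo,
    inter_eq_self_of_subset_left Ioo_subset_Ioi_self]

lemma differentiableOn_setIntegral_Ioo_cpow_sub_one_mul {g : ℝ → ℂ} {α : ℝ}
    (hg : IntegrableOn g (Ioo 0 δ)) (hg0 : g =O[𝓝[>] 0] fun t => t ^ α) :
    DifferentiableOn ℂ (fun w => ∫ t in Ioo 0 δ, (t : ℂ) ^ (w - 1) * g t)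
      {w : ℂ | -α < w.re} := by
  simp_rw [setIntegral_Ioo_cpow_sub_one_mul_eq_mellin]
  intro w hw
  have hloc : LocallyIntegrableOn ((Ioo 0 δ).indicator g) (Ioi 0) :=
    ((integrable_indicator_iff measurableSet_Ioo).2 hg).locallyIntegrable.locallyIntegrableOn _
  have htop : (Ioo 0 δ).indicator g =O[atTop] fun t => t ^ (-(w.re + 1)) := by
    refine EventuallyEq.trans_isBigO ?_ (isBigO_zero _ _)
    filter_upwards [eventually_ge_atTop δ] with t ht
    exact indicator_of_notMem (fun h => h.2.not_ge ht) _
  have hbot : (Ioo 0 δ).indicator g =O[𝓝[>] 0] fun t => t ^ (-(-α)) := by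
    simpa only [neg_neg] using (isBigO_of_le _ (norm_indicator_le_norm_self g)).trans hg0
  exact (mellin_differentiableAt_of_isBigO_rpow hloc htop (lt_add_one _) hbot hw)
    |>.differentiableWithinAt

theorem exists_differentiableOn_eq_mul_setIntegral_Ioo_cpow_sub_one_mul
    {u : ℝ → ℂ} {M : ℂ} {α K : ℝ} (hδ : 0 < δ)
    (hu : AEStronglyMeasurable u (volume.restrict (Ioo 0 δ)))
    (huK : ∀ t ∈ Ioo 0 δ, ‖u t‖ ≤ K) (huM : (fun t => u t - M) =O[𝓝[>] 0] fun t => t ^ α) :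
    ∃ F : ℂ → ℂ, DifferentiableOn ℂ F {w : ℂ | -α < w.re} ∧
      (∀ w : ℂ, 0 < w.re → F w = w * ∫ t in Ioo 0 δ, (t : ℂ) ^ (w - 1) * u t) ∧ F 0 = M := by
  refine ⟨fun w => M * (δ : ℂ) ^ w + w * ∫ t in Ioo 0 δ, (t : ℂ) ^ (w - 1) * (u t - M),
    ?_, fun w hw => ?_, by simp⟩
  · have hg : IntegrableOn (fun t => u t - M) (Ioo 0 δ) :=
      (IntegrableOn.of_bound measure_Ioo_lt_top hu K
        ((ae_restrict_iff' measurableSet_Ioo).2 (ae_of_all _ huK))).sub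
        (integrableOn_const measure_Ioo_lt_top.ne)
    have hδ0 : (δ : ℂ) ≠ 0 := Complex.ofReal_ne_zero.2 hδ.ne'
    have hpow : Differentiable ℂ fun w : ℂ => M * (δ : ℂ) ^ w := fun _ =>
      (differentiableAt_id.const_cpow (Or.inl hδ0)).const_mul _
    exact hpow.differentiableOn.add
      (differentiableOn_id.mul (differentiableOn_setIntegral_Ioo_cpow_sub_one_mul hg huM))
  · exact (mul_setIntegral_Ioo_cpow_sub_one_mul hδ.le hw M
      (integrableOn_Ioo_cpow_sub_one_mul hu huK hw)).symm

end TruncatedMellin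

section NormalizedGrowth

variable {V : ℝ → ℝ} {κ α C ε M : ℝ}

lemma abs_mul_rpow_neg_sub_le {t v : ℝ} (ht : 0 < t)
    (h : |v - M * t ^ κ| ≤ C * t ^ (κ + α)) : |v * t ^ (-κ) - M| ≤ C * t ^ α := by
  have hsplit : v * t ^ (-κ) - M = t ^ (-κ) * (v - M * t ^ κ) := by
    rw [mul_sub, mul_left_comm, ← Real.rpow_add ht, neg_add_cancel, Real.rpow_zero]
    ring
  rw [hsplit, abs_mul, abs_of_pos (Real.rpow_pos_of_pos ht _)]
  calc t ^ (-κ) * |v - M * t ^ κ| ≤ t ^ (-κ) * (C * t ^ (κ + α)) := by gcongr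
    _ = C * t ^ α := by rw [mul_left_comm, ← Real.rpow_add ht, neg_add_cancel_left]

lemma exists_forall_Ioo_abs_mul_rpow_neg_le (δ : ℝ) (hV : Monotone V) (hα : 0 ≤ α)
    (hC : 0 ≤ C) (hε : 0 < ε) (hO : ∀ t, 0 < t → t < ε → |V t - M * t ^ κ| ≤ C * t ^ (κ + α)) :
    ∃ K, ∀ t ∈ Ioo 0 δ, |V t * t ^ (-κ)| ≤ K := by
  obtain ⟨B, hB⟩ := (isCompact_Icc (a := ε) (b := δ)).exists_bound_of_continuousOn
    (f := fun t : ℝ => t ^ (-κ)) fun t ht =>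
      (Real.continuousAt_rpow_const _ _ (Or.inl (hε.trans_le ht.1).ne')).continuousWithinAt
  refine ⟨max (|M| + C * ε ^ α) (max |V ε| |V δ| * B), fun t ⟨ht0, htδ⟩ => ?_⟩
  rcases lt_or_ge t ε with htε | hεt
  · have hnear := abs_mul_rpow_neg_sub_le ht0 (hO t ht0 htε)
    have hmono : C * t ^ α ≤ C * ε ^ α := by gcongr
    linarith [abs_sub_abs_le_abs_sub (V t * t ^ (-κ)) M, le_max_left (|M| + C * ε ^ α)
      (max |V ε| |V δ| * B)]
  · have hVt : |V t| ≤ max |V ε| |V δ| := abs_le_max_abs_abs (hV hεt) (hV htδ.le)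
    have hrpow : |t ^ (-κ)| ≤ B := by simpa using hB t ⟨hεt, htδ.le⟩
    rw [abs_mul]
    exact (mul_le_mul hVt hrpow (abs_nonneg _) ((abs_nonneg _).trans hVt)).trans (le_max_right _ _)

lemma isBigO_mul_rpow_neg_sub (hε : 0 < ε)
    (hO : ∀ t, 0 < t → t < ε → |V t - M * t ^ κ| ≤ C * t ^ (κ + α)) :
    (fun t => V t * t ^ (-κ) - M) =O[𝓝[>] 0] fun t => t ^ α :=
  IsBigO.of_bound C <| eventually_of_mem (Ioo_mem_nhdsGT hε) fun t ⟨ht0, htε⟩ => by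
    rw [Real.norm_eq_abs, Real.norm_eq_abs, abs_of_pos (Real.rpow_pos_of_pos ht0 _)]
    exact abs_mul_rpow_neg_sub_le ht0 (hO t ht0 htε)

end NormalizedGrowth

lemma monotone_measure_thickening_toReal {X : Type*} [PseudoMetricSpace X] [ProperSpace X]
    [MeasurableSpace X] {μ : Measure X} [IsFiniteMeasureOnCompacts μ] {A : Set X}
    (hA : Bornology.IsBounded A) : Monotone fun t => (μ (thickening t A)).toReal :=
  fun _ _ hab => ENNReal.toReal_mono hA.thickening.measure_lt_top.ne
    (measure_mono (thickening_mono hab A))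

lemma tubeZeta_eq_setIntegral (N : ℕ) (A : Set (EuclideanSpace ℝ (Fin N))) (δ D : ℝ) (s : ℂ) :
    tubeZeta N A δ s = ∫ t in Ioo 0 δ, (t : ℂ) ^ (s - D - 1) *
      (((volume (thickening t A)).toReal * t ^ (-((N : ℝ) - D)) : ℝ) : ℂ) := by
  refine setIntegral_congr_fun measurableSet_Ioo fun t ht => ?_
  have ht0 : (t : ℂ) ≠ 0 := Complex.ofReal_ne_zero.2 ht.1.ne'
  have hexp : s - D - 1 + ((-((N : ℝ) - D) : ℝ) : ℂ) = s - N - 1 := by push_cast; ring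
  rw [Complex.ofReal_mul, Complex.ofReal_cpow ht.1.le, mul_left_comm, ← Complex.cpow_add _ _ ht0,
    hexp, mul_comm]

theorem stmt_7_general (N : ℕ) (A : Set (EuclideanSpace ℝ (Fin N)))
    (hAb : Bornology.IsBounded A) (δ : ℝ) (hδ : 0 < δ)
    (α M D : ℝ) (hα : 0 < α)
    (hO : ∃ C ε : ℝ, 0 < C ∧ 0 < ε ∧ ∀ t : ℝ, 0 < t → t < ε →
      |(volume (Metric.thickening t A)).toReal - M * t ^ ((N : ℝ) - D)|
        ≤ C * t ^ ((N : ℝ) - D + α)) :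
    ∃ F : ℂ → ℂ,
      DifferentiableOn ℂ F {s : ℂ | D - α < s.re} ∧
      (∀ s : ℂ, D < s.re → F s = (s - (D : ℂ)) * tubeZeta N A δ s) ∧
      F (D : ℂ) = (M : ℂ) := by
  obtain ⟨C, ε, hC, hε, hbound⟩ := hO
  set V : ℝ → ℝ := fun t => (volume (thickening t A)).toReal
  have hV : Monotone V := monotone_measure_thickening_toReal hAb
  obtain ⟨K, hK⟩ := exists_forall_Ioo_abs_mul_rpow_neg_le δ hV hα.le hC.le hε hbound
  set u : ℝ → ℂ := fun t => ((V t * t ^ (-((N : ℝ) - D)) : ℝ) : ℂ)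
  have hu : Measurable u :=
    Complex.measurable_ofReal.comp (hV.measurable.mul (measurable_id.pow_const _))
  have huM : (fun t => u t - M) =O[𝓝[>] 0] fun t => t ^ α := by
    simpa only [u, Complex.ofReal_sub] using
      Complex.isBigO_ofReal_left.2 (isBigO_mul_rpow_neg_sub hε hbound)
  obtain ⟨F, hF, hFeq, hF0⟩ := exists_differentiableOn_eq_mul_setIntegral_Ioo_cpow_sub_one_mul
    hδ hu.aestronglyMeasurable (by simpa only [u, Complex.norm_real, Real.norm_eq_abs] using hK) huM
  refine ⟨fun s => F (s - D), ?_, fun s hs => ?_, by simpa using hF0⟩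
  · exact hF.comp (differentiableOn_id.sub_const _) fun s (hs : D - α < s.re) =>
      show -α < (s - D).re by simp only [Complex.sub_re, Complex.ofReal_re]; linarith
  · show F (s - D) = _
    rw [hFeq (s - D) (by simpa using hs), tubeZeta_eq_setIntegral N A δ D s]

/-- If `|A_t| = t^{N-D}(M + O(t^α))` as `t → 0⁺`, then the tube zeta function admits a
meromorphic continuation to `{Re s > D - α}` whose only pole there is the simple pole
`s = D`, with residue `M`. (Formulated via the holomorphic function `(s - D)·ζ̃_A(s)`.) -/
theorem stmt_7 (N : ℕ) (A : Set (EuclideanSpace ℝ (Fin N))) (hA : A.Nonempty)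
    (hAb : Bornology.IsBounded A) (δ : ℝ) (hδ : 0 < δ)
    (α M D : ℝ) (hα : 0 < α) (hM : 0 < M) (hD : 0 ≤ D)
    (hO : ∃ C ε : ℝ, 0 < C ∧ 0 < ε ∧ ∀ t : ℝ, 0 < t → t < ε →
      |(volume (Metric.thickening t A)).toReal - M * t ^ ((N : ℝ) - D)|
        ≤ C * t ^ ((N : ℝ) - D + α)) :
    ∃ F : ℂ → ℂ,
      DifferentiableOn ℂ F {s : ℂ | D - α < s.re} ∧
      (∀ s : ℂ, D < s.re → F s = (s - (D : ℂ)) * tubeZeta N A δ s) ∧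
      F (D : ℂ) = (M : ℂ) :=
  stmt_7_general N A hAb δ hδ α M D hα hO
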